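/- Let E be a Hilbert C*-module over a C*-algebra A. A closed subspace M ⊆ E is invariant under the algebra K(E) generated by the rank-one operators θ_{η,ξ} if and only if it is invariant under all adjointable operators L(E), if and only if it is invariant under all bounded A-module operators End_A(E). That is, Lat K(E) = Lat L(E) = Lat End_A(E). -/

import Mathlib

open scoped InnerProductSpace RightActions
open Filter Topology

/-- The Hilbert C⋆-module class with a *right* `A`-action, as `CStarModule` was defined in
Mathlib (December 2024). -/
class RightCStarModule (A E : Type*) [NonUnitalSemiring A] [StarRing A] [Module ℂ A]
    [AddCommGroup E] [Module ℂ E] [PartialOrder A] [SMul Aᵐᵒᵖ E] [Norm A] [Norm E]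
    extends Inner A E where
  inner_add_right {x} {y} {z} : inner x (y + z) = inner x y + inner x z
  inner_self_nonneg {x} : 0 ≤ inner x x
  inner_self {x} : inner x x = 0 ↔ x = 0
  inner_op_smul_right {a : A} {x y : E} : inner x (y <• a) = inner x y * a
  inner_smul_right_complex {z : ℂ} {x} {y} : inner x (z • y) = z • inner x y
  star_inner x y : star (inner x y) = inner y x
  norm_eq_sqrt_norm_inner_self x : ‖x‖ = √‖inner x x‖

section Defs

variable (A : Type*) (E : Type*) [NonUnitalCStarAlgebra A] [PartialOrder A] [StarOrderedRing A]
  [NormedAddCommGroup E] [NormedSpace ℂ E] [SMul Aᵐᵒᵖ E] [RightCStarModule A E]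

/-- An operator on a Hilbert C*-module is *adjointable* if it admits an adjoint with respect to
the `A`-valued inner product. -/
def Adjointable (T : E →L[ℂ] E) : Prop :=
  ∃ S : E →L[ℂ] E, ∀ x y : E, ⟪T x, y⟫_A = ⟪x, S y⟫_A

/-- `EJ A E J` is the closed linear span `E(J)` of `{ξ • a : ξ ∈ E, a ∈ J}`. -/
noncomputable def EJ (J : Set A) : Submodule ℂ E :=
  (Submodule.span ℂ {y : E | ∃ ξ : E, ∃ a ∈ J, y = ξ <• a}).topologicalClosure

/-- `JM A E M` is the closed linear span `J(M)` of `{⟪η, m⟫ : η ∈ E, m ∈ M}`. -/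
noncomputable def JM (M : Set E) : Submodule ℂ A :=
  (Submodule.span ℂ {a : A | ∃ η : E, ∃ m ∈ M, a = ⟪η, m⟫_A}).topologicalClosure

/-- `BS A E` is the C*-algebra `B`, the closure of the linear span of all inner products. -/
noncomputable def BS : Set A :=
  closure (Submodule.span ℂ {a : A | ∃ η ξ : E, a = ⟪η, ξ⟫_A} : Set A)

/-- `KE A E` is `K(E)`, the closed (non-unital) algebra generated by the rank-one operators
`θ_{η,ξ} : x ↦ η • ⟪ξ, x⟫`. -/
noncomputable def KE : NonUnitalSubalgebra ℂ (E →L[ℂ] E) :=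
  (NonUnitalAlgebra.adjoin ℂ
    {T : E →L[ℂ] E | ∃ η ξ : E, ∀ x : E, T x = η <• ⟪ξ, x⟫_A}).topologicalClosure

end Defs


/-! Adjointable operators are `A`-linear, and `K(E)` is the closure of an algebra of adjointable
operators, so for closed `M` we get `Lat End_A(E) ⊆ Lat L(E) ⊆ Lat K(E)`. Conversely, fix a bounded
module map `S` and `x ∈ M`. The subspace `{a | S (x <• a) ∈ M}` contains every `⟪ξ, x⟫`, because
`S (x <• ⟪ξ, x⟫) = θ_{S x, ξ} x`; hence it contains `b = ⟪x, x⟫` and `A b`, and with them the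
polynomials `e_n = 1 - (1 - b / K) ^ n` in `b`, which have no constant term. Since
`‖x - x <• e_n‖² = ‖b (1 - e_n)²‖ ≤ K / n`, closedness of `M` gives `S x = lim S (x <• e_n) ∈ M`. -/

open MulOpposite Set

lemma natCast_mul_mul_one_sub_pow_le_one {s : ℝ} (hs₀ : 0 ≤ s) (hs₁ : s ≤ 1) (n : ℕ) :
    n * s * (1 - s) ^ n ≤ 1 := by
  have h : 0 ≤ (1 - s) ^ n := pow_nonneg (by linarith) n
  calc n * s * (1 - s) ^ n ≤ (1 + n * s) * (1 - s) ^ n := by gcongr; linarith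
    _ ≤ (1 + s) ^ n * (1 - s) ^ n := by gcongr; exact one_add_mul_le_pow (by linarith) n
    _ = (1 - s ^ 2) ^ n := by rw [← mul_pow]; ring
    _ ≤ 1 := pow_le_one₀ (by nlinarith) (by nlinarith)

lemma natCast_mul_mul_one_sub_div_pow_sq_le {K t : ℝ} (hK : 0 < K) (ht₀ : 0 ≤ t) (htK : t ≤ K)
    (n : ℕ) : n * (t * ((1 - t / K) ^ n) ^ 2) ≤ K := by
  have hs₀ : 0 ≤ t / K := by positivity
  have hs₁ : t / K ≤ 1 := div_le_one_of_le₀ htK hK.le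
  have hpow₀ : 0 ≤ (1 - t / K) ^ n := pow_nonneg (by linarith) n
  have hpow₁ : (1 - t / K) ^ n ≤ 1 := pow_le_one₀ (by linarith) (by linarith)
  calc n * (t * ((1 - t / K) ^ n) ^ 2) ≤ n * (t * (1 - t / K) ^ n) := by gcongr; nlinarith
    _ = K * (n * (t / K) * (1 - t / K) ^ n) := by field_simp
    _ ≤ K := mul_le_of_le_one_right hK.le (natCast_mul_mul_one_sub_pow_le_one hs₀ hs₁ n)

section ApproxUnit

variable {A : Type*} [NonUnitalCStarAlgebra A]

lemma cfcₙ_mul_one_sub_sq {b : A} (hb : IsSelfAdjoint b) {f : ℝ → ℝ} (hf : Continuous f)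
    (hf0 : f 0 = 0) :
    cfcₙ (fun t => t * (1 - f t) ^ 2) b =
      b - b * cfcₙ f b - cfcₙ f b * b + cfcₙ f b * b * cfcₙ f b := by
  have : (fun t : ℝ => t * (1 - f t) ^ 2) =
      fun t => t - t * f t - f t * t + f t * t * f t := by funext t; ring
  rw [this, cfcₙ_add (fun t => t - t * f t - f t * t) (fun t => f t * t * f t) b,
    cfcₙ_sub (fun t => t - t * f t) (fun t => f t * t) b,
    cfcₙ_sub (fun t => t) (fun t => t * f t) b, cfcₙ_mul (fun t => t) f b,
    cfcₙ_mul f (fun t => t) b, cfcₙ_mul (fun t => f t * t) f b, cfcₙ_mul f (fun t => t) b,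
    cfcₙ_id' ℝ b]

-- `K = ‖b‖ + 1 > ‖b‖` keeps `1 - t / K` in `[0, 1]` on the spectrum of `b ≥ 0`.
noncomputable def approxUnit (b : A) (n : ℕ) : A :=
  cfcₙ (fun t : ℝ => 1 - (1 - t / (‖b‖ + 1)) ^ n) b

lemma approxUnit_zero (b : A) : approxUnit b 0 = 0 := by
  simp [approxUnit]

lemma approxUnit_succ {b : A} (hb : IsSelfAdjoint b) (n : ℕ) :
    approxUnit b (n + 1) = approxUnit b n + (‖b‖ + 1)⁻¹ • (b - approxUnit b n * b) := by
  set K := ‖b‖ + 1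
  set f : ℝ → ℝ := fun t => 1 - (1 - t / K) ^ n
  have hf : Continuous f := by fun_prop
  have hf0 : f 0 = 0 := by simp [f]
  have key : (fun t : ℝ => 1 - (1 - t / K) ^ (n + 1)) = fun t => f t + K⁻¹ * (t - f t * t) := by
    funext t; simp only [f]; ring
  rw [approxUnit, key, cfcₙ_add f (fun t => K⁻¹ * (t - f t * t)) b,
    cfcₙ_const_mul K⁻¹ (fun t => t - f t * t) b, cfcₙ_sub (fun t => t) (fun t => f t * t) b,
    cfcₙ_mul f (fun t => t) b, cfcₙ_id' ℝ b]
  rfl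

lemma approxUnit_mem {V : Submodule ℂ A} {b : A} (hb : IsSelfAdjoint b) (hbV : b ∈ V)
    (hV : ∀ c, c * b ∈ V) (n : ℕ) : approxUnit b n ∈ V := by
  induction n with
  | zero => rw [approxUnit_zero]; exact V.zero_mem
  | succ n ih =>
    rw [approxUnit_succ hb]
    exact V.add_mem ih (Submodule.smul_of_tower_mem V _ (V.sub_mem hbV (hV _)))

lemma isSelfAdjoint_approxUnit (b : A) (n : ℕ) : IsSelfAdjoint (approxUnit b n) :=
  cfcₙ_predicate _ b

variable [PartialOrder A] [StarOrderedRing A]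

lemma tendsto_approxUnit_error {b : A} (hb : 0 ≤ b) :
    Tendsto (fun n => b - b * approxUnit b n - approxUnit b n * b +
      approxUnit b n * b * approxUnit b n) atTop (𝓝 0) := by
  set K := ‖b‖ + 1
  have hK : 0 < K := by positivity
  have bound (n : ℕ) (hn : 1 ≤ n) : ‖b - b * approxUnit b n - approxUnit b n * b +
      approxUnit b n * b * approxUnit b n‖ ≤ K / n := by
    rw [approxUnit, ← cfcₙ_mul_one_sub_sq (.of_nonneg hb) (by fun_prop) (by simp)]
    refine norm_cfcₙ_le fun t ht => ?_
    have ht₀ : 0 ≤ t := quasispectrum_nonneg_of_nonneg b hb t ht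
    have htb : ‖t‖ ≤ ‖b‖ :=
      NonUnitalIsometricContinuousFunctionalCalculus.norm_quasispectrum_le b ht (.of_nonneg hb)
    rw [Real.norm_of_nonneg ht₀] at htb
    have hn : (0 : ℝ) < n := by exact_mod_cast hn
    rw [sub_sub_cancel, Real.norm_of_nonneg (by positivity), le_div_iff₀ hn, mul_comm]
    exact natCast_mul_mul_one_sub_div_pow_sq_le hK ht₀ (by linarith) n
  exact squeeze_zero_norm' (eventually_atTop.2 ⟨1, bound⟩) (tendsto_const_div_atTop_nhds_zero_nat K)

end ApproxUnit

namespace RightCStarModule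

section

variable {A E : Type*} [NonUnitalCStarAlgebra A] [PartialOrder A]
  [AddCommGroup E] [Module ℂ E] [Norm E] [SMul Aᵐᵒᵖ E] [RightCStarModule A E]

-- A right `A`-action is a left `Aᵐᵒᵖ`-action, so `E` is a Hilbert `Aᵐᵒᵖ`-module in Mathlib's
-- sense; the inner product calculus and Cauchy–Schwarz below are transported from there.
instance toCStarModuleMulOpposite : CStarModule Aᵐᵒᵖ E where
  inner x y := op ⟪x, y⟫_A
  inner_add_right := congrArg op inner_add_right
  inner_self_nonneg := inner_self_nonneg (A := A)
  inner_self := op_eq_zero_iff _ |>.trans inner_self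
  inner_op_smul_right := congrArg op inner_op_smul_right
  inner_smul_right_complex := congrArg op inner_smul_right_complex
  star_inner x y := congrArg op (star_inner x y)
  norm_eq_sqrt_norm_inner_self := norm_eq_sqrt_norm_inner_self (A := A)

lemma inner_add_left (x y z : E) : ⟪x + y, z⟫_A = ⟪x, z⟫_A + ⟪y, z⟫_A :=
  op_injective (CStarModule.inner_add_left (A := Aᵐᵒᵖ) (x := x) (y := y) (z := z))

lemma inner_sub_left (x y z : E) : ⟪x - y, z⟫_A = ⟪x, z⟫_A - ⟪y, z⟫_A :=
  op_injective (CStarModule.inner_sub_left (A := Aᵐᵒᵖ) (x := x) (y := y) (z := z))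

lemma inner_sub_right (x y z : E) : ⟪x, y - z⟫_A = ⟪x, y⟫_A - ⟪x, z⟫_A :=
  op_injective (CStarModule.inner_sub_right (A := Aᵐᵒᵖ) (x := x) (y := y) (z := z))

lemma inner_zero_left (x : E) : ⟪0, x⟫_A = 0 :=
  op_injective (CStarModule.inner_zero_left (A := Aᵐᵒᵖ) (x := x))

lemma inner_zero_right (x : E) : ⟪x, 0⟫_A = 0 :=
  op_injective (CStarModule.inner_zero_right (A := Aᵐᵒᵖ) (x := x))

lemma inner_op_smul_left (a : A) (x y : E) : ⟪x <• a, y⟫_A = star a * ⟪x, y⟫_A :=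
  op_injective (CStarModule.inner_op_smul_left (A := Aᵐᵒᵖ) (a := op a) (x := x) (y := y))

lemma inner_smul_left_complex (z : ℂ) (x y : E) : ⟪z • x, y⟫_A = star z • ⟪x, y⟫_A :=
  op_injective (CStarModule.inner_smul_left_complex (A := Aᵐᵒᵖ) (z := z) (x := x) (y := y))

variable (A) in
lemma ext_inner_left {x y : E} (h : ∀ z, ⟪z, x⟫_A = ⟪z, y⟫_A) : x = y :=
  sub_eq_zero.mp <| (inner_self (A := A)).mp <| by rw [inner_sub_right, h, sub_self]

lemma inner_sub_op_smul_self (x : E) (e : A) :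
    ⟪x - x <• e, x - x <• e⟫_A =
      ⟪x, x⟫_A - ⟪x, x⟫_A * e - star e * ⟪x, x⟫_A + star e * ⟪x, x⟫_A * e := by
  simp only [inner_sub_left, inner_sub_right, inner_op_smul_left, inner_op_smul_right]
  noncomm_ring

variable (A) in
lemma norm_sq_eq (x : E) : ‖x‖ ^ 2 = ‖⟪x, x⟫_A‖ :=
  CStarModule.norm_sq_eq Aᵐᵒᵖ (x := x)

lemma norm_op_smul_le (x : E) (a : A) : ‖x <• a‖ ≤ ‖x‖ * ‖a‖ := by
  refine (pow_le_pow_iff_left₀ (CStarModule.norm_nonneg Aᵐᵒᵖ)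
    (mul_nonneg (CStarModule.norm_nonneg Aᵐᵒᵖ) (norm_nonneg a)) two_ne_zero).mp ?_
  calc ‖x <• a‖ ^ 2 = ‖star a * ⟪x, x⟫_A * a‖ := by
        rw [norm_sq_eq A, inner_op_smul_left, inner_op_smul_right, mul_assoc]
    _ ≤ ‖a‖ * ‖⟪x, x⟫_A‖ * ‖a‖ := by
        grw [norm_mul_le, norm_mul_le, norm_star]
    _ = (‖x‖ * ‖a‖) ^ 2 := by rw [← norm_sq_eq A]; ring

end

variable {A E : Type*} [NonUnitalCStarAlgebra A] [PartialOrder A]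
  [NormedAddCommGroup E] [NormedSpace ℂ E] [SMul Aᵐᵒᵖ E] [RightCStarModule A E]

lemma _root_.Adjointable.map_op_smul {T : E →L[ℂ] E} (hT : Adjointable A E T) (ξ : E) (a : A) :
    T (ξ <• a) = T ξ <• a := by
  obtain ⟨S, hS⟩ := hT
  have hS' (x y : E) : ⟪x, T y⟫_A = ⟪S x, y⟫_A := by rw [← star_inner, hS, star_inner]
  exact ext_inner_left A fun y => by rw [hS', inner_op_smul_right, inner_op_smul_right, hS']

noncomputable def opSMulCLM (x : E) : A →L[ℂ] E :=
  LinearMap.mkContinuous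
    { toFun := (x <• ·)
      map_add' a b := ext_inner_left A fun y => by
        simp only [inner_add_right, inner_op_smul_right, mul_add]
      map_smul' c a := ext_inner_left A fun y => by
        simp only [inner_op_smul_right, inner_smul_right_complex, mul_smul_comm,
          RingHom.id_apply] }
    ‖x‖ (norm_op_smul_le x)

variable [StarOrderedRing A]

lemma norm_inner_le (x y : E) : ‖⟪x, y⟫_A‖ ≤ ‖x‖ * ‖y‖ :=
  CStarModule.norm_inner_le (A := Aᵐᵒᵖ) E

variable (A) in
noncomputable def innerRightCLM (x : E) : E →L[ℂ] A :=
  LinearMap.mkContinuous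
    { toFun := (⟪x, ·⟫_A)
      map_add' _ _ := inner_add_right
      map_smul' _ _ := inner_smul_right_complex }
    ‖x‖ (norm_inner_le x)

variable (A) in
noncomputable def rankOne (η ξ : E) : E →L[ℂ] E := opSMulCLM η ∘L innerRightCLM A ξ

lemma rankOne_apply (η ξ x : E) : rankOne A η ξ x = η <• ⟪ξ, x⟫_A := rfl

lemma tendsto_op_smul_approxUnit (x : E) :
    Tendsto (fun n => x <• approxUnit ⟪x, x⟫_A n) atTop (𝓝 x) := by
  rw [tendsto_iff_norm_sub_tendsto_zero]
  have h := (tendsto_approxUnit_error (b := ⟪x, x⟫_A) inner_self_nonneg).norm.sqrt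
  rw [norm_zero, Real.sqrt_zero] at h
  refine h.congr fun n => ?_
  symm
  rw [norm_sub_rev, norm_eq_sqrt_norm_inner_self (A := A), inner_sub_op_smul_self,
    (isSelfAdjoint_approxUnit _ n).star_eq]

lemma rankOne_mem_KE (η ξ : E) : rankOne A η ξ ∈ KE A E :=
  NonUnitalSubalgebra.le_topologicalClosure _
    (NonUnitalAlgebra.subset_adjoin ℂ ⟨η, ξ, rankOne_apply η ξ⟩)

lemma adjointable_of_mem_adjoin {T : E →L[ℂ] E}
    (hT : T ∈ NonUnitalAlgebra.adjoin ℂ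
      {T : E →L[ℂ] E | ∃ η ξ : E, ∀ x : E, T x = η <• ⟪ξ, x⟫_A}) :
    Adjointable A E T := by
  induction hT using NonUnitalAlgebra.adjoin_induction with
  | mem T hT =>
    obtain ⟨η, ξ, hθ⟩ := hT
    refine ⟨rankOne A ξ η, fun x y => ?_⟩
    rw [hθ, rankOne_apply, inner_op_smul_left, inner_op_smul_right, star_inner]
  | add T₁ T₂ _ _ ih₁ ih₂ =>
    obtain ⟨S₁, hS₁⟩ := ih₁
    obtain ⟨S₂, hS₂⟩ := ih₂
    exact ⟨S₁ + S₂, fun x y => by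
      simp only [add_apply, inner_add_left, inner_add_right, hS₁, hS₂]⟩
  | zero => exact ⟨0, fun x y => by simp only [zero_apply, inner_zero_left, inner_zero_right]⟩
  | mul T₁ T₂ _ _ ih₁ ih₂ =>
    obtain ⟨S₁, hS₁⟩ := ih₁
    obtain ⟨S₂, hS₂⟩ := ih₂
    exact ⟨S₂ ∘L S₁, fun x y => (hS₁ _ _).trans (hS₂ _ _)⟩
  | smul c T _ ih =>
    obtain ⟨S, hS⟩ := ih
    exact ⟨star c • S, fun x y => by simp only [smul_apply,
      inner_smul_left_complex, inner_smul_right_complex, hS]⟩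

lemma mapsTo_of_mem_KE {M : Set E} (hM : IsClosed M)
    (hL : ∀ T : E →L[ℂ] E, Adjointable A E T → MapsTo T M M) {T : E →L[ℂ] E}
    (hT : T ∈ KE A E) : MapsTo T M M :=
  closure_minimal (fun _ hS => hL _ (adjointable_of_mem_adjoin hS))
    (hM.setOfPred_mapsTo fun x _ => continuous_eval_const x) hT

lemma mapsTo_of_map_op_smul {M : Submodule ℂ E} (hM : IsClosed (M : Set E))
    (hK : ∀ T : E →L[ℂ] E, T ∈ KE A E → MapsTo T M M) {S : E →L[ℂ] E}
    (hS : ∀ (ξ : E) (a : A), S (ξ <• a) = S ξ <• a) : MapsTo S M M := by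
  intro x hx
  let V : Submodule ℂ A := M.comap (S ∘L opSMulCLM x).toLinearMap
  have hV (ξ : E) : ⟪ξ, x⟫_A ∈ V := by
    change S (x <• ⟪ξ, x⟫_A) ∈ M
    rw [hS]
    exact hK _ (rankOne_mem_KE (S x) ξ) hx
  have hb : IsSelfAdjoint ⟪x, x⟫_A := star_inner x x
  have hcb (c : A) : c * ⟪x, x⟫_A ∈ V := by
    simpa only [inner_op_smul_left, star_star] using hV (x <• star c)
  exact hM.mem_of_tendsto ((S.continuous.tendsto x).comp (tendsto_op_smul_approxUnit x))
    (Eventually.of_forall (approxUnit_mem hb (hV x) hcb))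

end RightCStarModule

open RightCStarModule

variable {A E : Type*} [NonUnitalCStarAlgebra A] [PartialOrder A] [StarOrderedRing A]
  [NormedAddCommGroup E] [NormedSpace ℂ E] [SMul Aᵐᵒᵖ E] [RightCStarModule A E]

/-- `Lat K(E) = Lat L(E) = Lat End_A(E)`: a closed subspace `M ⊆ E` is invariant under the
closed algebra `K(E)` generated by the rank-one operators iff it is invariant under every
adjointable operator, iff it is invariant under every bounded `A`-module operator. -/
theorem lat_KE_eq_lat_LE_eq_lat_End (M : Submodule ℂ E) (hMclosed : IsClosed (M : Set E)) :
    ((∀ T : E →L[ℂ] E, T ∈ KE A E → ∀ x ∈ M, T x ∈ M) ↔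
      (∀ T : E →L[ℂ] E, Adjointable A E T → ∀ x ∈ M, T x ∈ M)) ∧
    ((∀ T : E →L[ℂ] E, Adjointable A E T → ∀ x ∈ M, T x ∈ M) ↔
      (∀ S : E →L[ℂ] E, (∀ (ξ : E) (a : A), S (ξ <• a) = S ξ <• a) →
        ∀ x ∈ M, S x ∈ M)) := by
  refine ⟨⟨fun hK T hT => ?_, fun hL T hT => mapsTo_of_mem_KE hMclosed hL hT⟩,
    ⟨fun hL S hS =>
      mapsTo_of_map_op_smul hMclosed (fun T hT => mapsTo_of_mem_KE hMclosed hL hT) hS,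
      fun hEnd T hT => hEnd T hT.map_op_smul⟩⟩
  exact mapsTo_of_map_op_smul hMclosed hK hT.map_op_smul
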